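/- arXiv:1711.10580 — 7 statements merged into one kernel-verified Lean document; each statement's English description precedes it below -/
import Mathlib

section
/- Let R be a ring with Jacobson radical J such that every finitely generated Artinian left R-module has finite length. If the injective hull of every simple left R-module is locally Artinian, then for every left ideal I of R one has ⋂_{n≥0} (I + J^n) = I. -/
/-!
Suppose `x ∈ ⋂ₙ (I + Jⁿ)` but `x ∉ I`. Enlarge `0` to a submodule `K` of `R ⧸ I` maximal with
`x̄ ∉ K`; then the image of `x` lies in every nonzero submodule of the cyclic module
`M = (R ⧸ I) ⧸ K`, so `M` has an essential simple submodule. That submodule stays essential in an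
injective hull `E` of `M`, so (⋄) makes `M ⊆ E` Artinian, hence of finite length, hence killed by
some `Jⁿ`. But `x ∈ I + Jⁿ` puts the nonzero image of `x` in `Jⁿ M`.
-/

universe u

/-- Property (⋄): the injective hull of every simple left `R`-module is locally
Artinian.  Equivalently stated: every injective left `R`-module containing an
essential simple submodule (i.e. every injective hull of a simple module) has
all of its finitely generated submodules Artinian. -/
def HasDiamond (R : Type u) [Ring R] : Prop :=
  ∀ (E : Type u) [AddCommGroup E] [Module R E], Module.Injective R E →
    (∃ S : Submodule R E, IsSimpleModule R S ∧ ∀ N : Submodule R E, N ≠ ⊥ → S ⊓ N ≠ ⊥) →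
    ∀ N : Submodule R E, N.FG → IsArtinian R N

open Submodule

theorem exists_le_maximal_of_chain_sSup_mem {α : Type*} [CompleteLattice α] {s : Set α}
    (hs : ∀ c ⊆ s, IsChain (· ≤ ·) c → c.Nonempty → sSup c ∈ s) {a : α} (ha : a ∈ s) :
    ∃ m, a ≤ m ∧ Maximal (· ∈ s) m :=
  zorn_le_nonempty₀ s
    (fun c hc hchain b hb => ⟨sSup c, hs c hc hchain ⟨b, hb⟩, fun _ hz => le_sSup hz⟩) a ha

namespace Submodule

variable {R M M' : Type*} [Ring R] [AddCommGroup M] [Module R M] [AddCommGroup M'] [Module R M']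

/-- `N.IsEssentialIn ⊤` is the usual notion of an essential submodule; `N ≤ X` is not required. -/
def IsEssentialIn (N X : Submodule R M) : Prop :=
  ∀ z ∈ X, z ≠ 0 → ∃ r : R, r • z ∈ N ∧ r • z ≠ 0

theorem IsEssentialIn.trans {N X Y : Submodule R M} (hNX : N.IsEssentialIn X)
    (hXY : X.IsEssentialIn Y) : N.IsEssentialIn Y := by
  intro z hz hz0
  obtain ⟨r, hrX, hr0⟩ := hXY z hz hz0
  obtain ⟨s, hsN, hs0⟩ := hNX _ hrX hr0
  exact ⟨s * r, by rwa [mul_smul], by rwa [mul_smul]⟩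

theorem IsEssentialIn.map {N X : Submodule R M} (h : N.IsEssentialIn X) {f : M →ₗ[R] M'}
    (hf : Function.Injective f) : (N.map f).IsEssentialIn (X.map f) := by
  rintro _ ⟨z, hz, rfl⟩ hz0
  obtain ⟨r, hrN, hr0⟩ := h z hz (by rintro rfl; exact hz0 (map_zero f))
  refine ⟨r, ?_, ?_⟩
  · rw [← map_smul]
    exact mem_map_of_mem hrN
  · rwa [← map_smul, ne_eq, map_eq_zero_iff f hf]

theorem IsEssentialIn.comap_subtype {N X : Submodule R M} (h : N.IsEssentialIn X) :
    (N.comap X.subtype).IsEssentialIn ⊤ := by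
  intro z _ hz0
  obtain ⟨r, hrN, hr0⟩ := h z z.2 (by exact_mod_cast hz0)
  exact ⟨r, hrN, by exact_mod_cast hr0⟩

theorem IsEssentialIn.inf_ne_bot {N N' : Submodule R M} (h : N.IsEssentialIn ⊤) (hN' : N' ≠ ⊥) :
    N ⊓ N' ≠ ⊥ := by
  obtain ⟨z, hz, hz0⟩ := N'.ne_bot_iff.mp hN'
  obtain ⟨r, hrN, hr0⟩ := h z mem_top hz0
  exact (N ⊓ N').ne_bot_iff.mpr ⟨r • z, ⟨hrN, N'.smul_mem r hz⟩, hr0⟩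

theorem isEssentialIn_span_singleton_top {y : M} (hy0 : y ≠ 0)
    (hy : ∀ N : Submodule R M, N ≠ ⊥ → y ∈ N) : (span R {y}).IsEssentialIn ⊤ := by
  intro z _ hz0
  obtain ⟨r, rfl⟩ := mem_span_singleton.mp (hy _ (by rwa [ne_eq, span_singleton_eq_bot]))
  exact ⟨r, mem_span_singleton_self _, hy0⟩

theorem isSimpleModule_span_singleton {y : M} (hy0 : y ≠ 0)
    (hy : ∀ N : Submodule R M, N ≠ ⊥ → y ∈ N) : IsSimpleModule R (span R {y}) := by
  rw [isSimpleModule_iff_isAtom]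
  refine ⟨by rwa [ne_eq, span_singleton_eq_bot], fun N hN => ?_⟩
  by_contra hN0
  exact hN.not_ge (span_le.mpr (Set.singleton_subset_iff.mpr (hy N hN0)))

theorem exists_le_maximal_notMem {y : M} {N : Submodule R M} (hy : y ∉ N) :
    ∃ K, N ≤ K ∧ Maximal (y ∉ ·) K := by
  refine exists_le_maximal_of_chain_sSup_mem (fun c hc hchain hne hyc => ?_) hy
  obtain ⟨K, hKc, hyK⟩ := (mem_sSup_of_directed hne hchain.directedOn).mp hyc
  exact hc hKc hyK

theorem mkQ_mem_of_maximal_notMem {y : M} {K : Submodule R M} (hK : Maximal (y ∉ ·) K)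
    {N : Submodule R (M ⧸ K)} (hN : N ≠ ⊥) : K.mkQ y ∈ N := by
  by_contra hyN
  have hle : N.comap K.mkQ ≤ K :=
    hK.2 hyN ((ker_mkQ K).ge.trans (LinearMap.ker_le_comap _))
  apply hN
  rw [eq_bot_iff, ← map_comap_eq_of_surjective K.mkQ_surjective N, ← mkQ_map_self K]
  exact map_mono hle

theorem isEssentialIn_map_mkQ_of_maximal_disjoint {H C : Submodule R M}
    (hC : Maximal (Disjoint · H) C) : (H.map C.mkQ).IsEssentialIn ⊤ := by
  intro w _ hw
  obtain ⟨e, rfl⟩ := C.mkQ_surjective w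
  have he : e ∉ C := fun he => hw ((Quotient.mk_eq_zero C).mpr he)
  have hnd : ¬ Disjoint (C ⊔ span R {e}) H := fun hd =>
    he (hC.2 hd le_sup_left (mem_sup_right (mem_span_singleton_self e)))
  obtain ⟨z, hzCe, hzH, hz0⟩ : ∃ z ∈ C ⊔ span R {e}, z ∈ H ∧ z ≠ 0 := by
    simpa only [disjoint_def, not_forall, exists_prop] using hnd
  obtain ⟨c, hc, _, hs, rfl⟩ := mem_sup.mp hzCe
  obtain ⟨r, rfl⟩ := mem_span_singleton.mp hs
  have hmk : C.mkQ (c + r • e) = r • C.mkQ e := by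
    rw [map_add, map_smul, mkQ_apply, (Quotient.mk_eq_zero C).mpr hc, zero_add]
  refine ⟨r, hmk ▸ mem_map_of_mem hzH, fun hr => hz0 ?_⟩
  rw [← hmk, mkQ_apply, Quotient.mk_eq_zero] at hr
  exact (disjoint_def.mp hC.1) _ hr hzH

theorem _root_.LinearMap.injective_of_isEssentialIn {N : Submodule R M} (hN : N.IsEssentialIn ⊤)
    {f : M →ₗ[R] M'} (hf : Disjoint N (LinearMap.ker f)) : Function.Injective f := by
  refine (injective_iff_map_eq_zero f).mpr fun w hw => by_contra fun hw0 => ?_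
  obtain ⟨r, hrN, hr0⟩ := hN w mem_top hw0
  exact hr0 (disjoint_def.mp hf _ hrN (by rw [LinearMap.mem_ker, map_smul, hw, smul_zero]))

end Submodule

namespace Module

variable {R M : Type*} [Ring R] [AddCommGroup M] [Module R M]

theorem Injective.of_isCompl [Module.Injective R M] {H C : Submodule R M} (h : IsCompl H C) :
    Module.Injective R H :=
  ⟨fun _ _ _ _ _ _ f hf g =>
    let ⟨k, hk⟩ := Module.Injective.out f hf (H.subtype ∘ₗ g)
    ⟨H.projectionOnto C h ∘ₗ k, fun x => by
      rw [LinearMap.comp_apply, hk, LinearMap.comp_apply, subtype_apply,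
        projectionOnto_apply_left]⟩⟩

theorem Injective.exists_isCompl [Module.Injective R M] {H : Submodule R M}
    (hH : ∀ X, H ≤ X → H.IsEssentialIn X → X ≤ H) : ∃ C, IsCompl H C := by
  obtain ⟨C, -, hC⟩ := exists_le_maximal_of_chain_sSup_mem (s := {C | Disjoint C H})
    (fun c hc hchain _ => hchain.directedOn.disjoint_sSup_left.mpr hc) disjoint_bot_left
  set g : H →ₗ[R] M ⧸ C := C.mkQ ∘ₗ H.subtype
  have hg : Function.Injective g := by
    refine (injective_iff_map_eq_zero g).mpr fun a ha => Subtype.ext ?_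
    exact disjoint_def.mp hC.1 _ ((Quotient.mk_eq_zero C).mp ha) a.2
  have hgess : (LinearMap.range g).IsEssentialIn ⊤ := by
    rw [LinearMap.range_comp, range_subtype]
    exact isEssentialIn_map_mkQ_of_maximal_disjoint hC
  -- `M ⧸ C` is an essential extension of `H` via `g`; extending `H ↪ M` along `g` embeds it back
  -- into `M` over `H`, and since `H` has no proper essential extension, `g` must be onto.
  obtain ⟨h, hh⟩ := Module.Injective.out g hg H.subtype
  have hinj : Function.Injective h := LinearMap.injective_of_isEssentialIn hgess <|
    disjoint_def.mpr fun _ ⟨a, ha⟩ hz => by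
      rw [← ha, LinearMap.mem_ker, hh, subtype_apply, ZeroMemClass.coe_eq_zero] at hz
      rw [← ha, hz, map_zero]
  have hH_eq : (LinearMap.range g).map h = H := by
    rw [← LinearMap.range_comp, show h ∘ₗ g = H.subtype from LinearMap.ext hh, range_subtype]
  have hrange : LinearMap.range h ≤ H := by
    refine hH _ (hH_eq ▸ LinearMap.map_le_range) ?_
    simpa only [hH_eq, Submodule.map_top] using hgess.map hinj
  have hg_surj : Function.Surjective g := fun w =>
    ⟨⟨h w, hrange ⟨w, rfl⟩⟩, hinj (hh _)⟩
  refine ⟨C, disjoint_comm.mp hC.1, codisjoint_iff.mpr ?_⟩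
  rw [sup_comm, ← map_mkQ_eq_top, ← range_subtype H, ← LinearMap.range_comp]
  exact LinearMap.range_eq_top.mpr hg_surj

theorem exists_injective_isEssentialIn_range (R : Type u) [Ring R] (M : Type u) [AddCommGroup M]
    [Module R M] : ∃ (E : ModuleCat.{u} R) (f : M →ₗ[R] E),
      Module.Injective R E ∧ Function.Injective f ∧ (LinearMap.range f).IsEssentialIn ⊤ := by
  let E₀ := CategoryTheory.Injective.under (ModuleCat.of R M)
  let ι := CategoryTheory.Injective.ι (ModuleCat.of R M)
  have hι : Function.Injective ι.hom := (ModuleCat.mono_iff_injective ι).mp inferInstance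
  have : CategoryTheory.Injective (ModuleCat.of R E₀) := CategoryTheory.Injective.injective_under _
  have := Module.injective_module_of_injective_object R E₀
  set N := LinearMap.range ι.hom
  obtain ⟨H, -, hH⟩ := exists_le_maximal_of_chain_sSup_mem (s := {X | N ≤ X ∧ N.IsEssentialIn X})
    (fun c hc hchain ⟨X, hX⟩ => ⟨(hc hX).1.trans (le_sSup hX), fun z hz hz0 => by
      obtain ⟨Y, hY, hzY⟩ := (mem_sSup_of_directed ⟨X, hX⟩ hchain.directedOn).mp hz
      exact (hc hY).2 z hzY hz0⟩)
    (a := N) ⟨le_rfl, fun z hz hz0 => ⟨1, by rwa [one_smul], by rwa [one_smul]⟩⟩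
  obtain ⟨C, hHC⟩ := Injective.exists_isCompl fun X hHX hX =>
    hH.2 ⟨hH.1.1.trans hHX, hH.1.2.trans hX⟩ hHX
  refine ⟨ModuleCat.of R H, LinearMap.codRestrict H ι.hom fun m => hH.1.1 ⟨m, rfl⟩,
    Injective.of_isCompl hHC, ?_, ?_⟩
  · exact fun _ _ hab => hι (congrArg Subtype.val hab)
  · rw [LinearMap.range_codRestrict]
    exact hH.1.2.comap_subtype

end Module

theorem exists_jacobson_pow_smul_top_eq_bot (R M : Type*) [Ring R] [AddCommGroup M] [Module R M]
    [IsNoetherian R M] [IsArtinian R M] :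
    ∃ n : ℕ, Ring.jacobson R ^ n • (⊤ : Submodule R M) = ⊥ := by
  obtain ⟨n, hn⟩ := IsArtinian.monotone_stabilizes
    ⟨fun n => OrderDual.toDual (Ring.jacobson R ^ n • (⊤ : Submodule R M)),
      fun _ _ h => Submodule.smul_mono_left (Ideal.pow_le_pow_right h)⟩
  refine ⟨n + 1, by_contra fun hne => ?_⟩
  -- Nakayama: `J • N < N` for the nonzero finitely generated `N = Jⁿ⁺¹ • ⊤`, yet `J • N = N`.
  have hlt := (IsNoetherian.noetherian _).jacobson_smul_lt hne
  have hpow : Ring.jacobson R * Ring.jacobson R ^ (n + 1) = Ring.jacobson R ^ (n + 2) :=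
    (Submodule.pow_succ' _ n.succ_ne_zero).symm
  rw [← Submodule.mul_smul, hpow] at hlt
  exact hlt.ne ((hn (n + 2) (by omega)).symm.trans (hn (n + 1) (by omega)))

theorem HasDiamond.isArtinian {R : Type u} [Ring R] (hd : HasDiamond R) {M : Type u}
    [AddCommGroup M] [Module R M] [Module.Finite R M] {S : Submodule R M} [IsSimpleModule R S]
    (hS : S.IsEssentialIn ⊤) : IsArtinian R M := by
  obtain ⟨E, f, hE, hf, hfess⟩ := Module.exists_injective_isEssentialIn_range R M
  have hSE : (S.map f).IsEssentialIn ⊤ := by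
    refine IsEssentialIn.trans ?_ hfess
    simpa only [Submodule.map_top] using hS.map hf
  have : IsArtinian R (LinearMap.range f) :=
    hd E hE ⟨S.map f, IsSimpleModule.congr (S.equivMapOfInjective f hf).symm,
      fun _ hN => hSE.inf_ne_bot hN⟩ _ (LinearMap.range_eq_map f ▸ (Module.Finite.fg_top).map f)
  exact isArtinian_of_linearEquiv (LinearEquiv.ofInjective f hf).symm

/-- If every finitely generated Artinian left `R`-module has finite length and `R`
satisfies (⋄), then `⋂ₙ (I + J^n) = I` for every left ideal `I`, where `J` is the
Jacobson radical of `R`. -/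
theorem diamond_implies_krull_intersection (R : Type u) [Ring R]
    (hfl : ∀ (M : Type u) [AddCommGroup M] [Module R M],
      Module.Finite R M → IsArtinian R M → IsFiniteLength R M)
    (hd : HasDiamond R) (I : Ideal R) :
    ⨅ n : ℕ, (I + (Ideal.jacobson (⊥ : Ideal R)) ^ n) = I := by
  rw [Ideal.jacobson_bot]
  refine le_antisymm (fun x hx => by_contra fun hxI => ?_) (le_iInf fun _ => le_sup_left)
  obtain ⟨K, -, hK⟩ := exists_le_maximal_notMem (y := I.mkQ x) (N := ⊥)
    (by rwa [mem_bot R, mkQ_apply, Quotient.mk_eq_zero])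
  let π : R →ₗ[R] (R ⧸ I) ⧸ K := K.mkQ ∘ₗ I.mkQ
  have hy0 : π x ≠ 0 := fun h => hK.1 ((Quotient.mk_eq_zero K).mp h)
  have hy : ∀ N : Submodule R ((R ⧸ I) ⧸ K), N ≠ ⊥ → π x ∈ N := fun _ hN =>
    mkQ_mem_of_maximal_notMem hK hN
  have := isSimpleModule_span_singleton hy0 hy
  have := hd.isArtinian (isEssentialIn_span_singleton_top hy0 hy)
  obtain ⟨_, _⟩ := isFiniteLength_iff_isNoetherian_isArtinian.mp (hfl _ inferInstance this)
  obtain ⟨n, hn⟩ := exists_jacobson_pow_smul_top_eq_bot R ((R ⧸ I) ⧸ K)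
  obtain ⟨i, hi, j, hj, rfl⟩ := mem_sup.mp ((mem_iInf _).mp hx n)
  have hπ : π (i + j) = π j := by
    simp [π, (Quotient.mk_eq_zero I).mpr hi]
  apply hy0
  rw [← mem_bot R, ← hn, hπ]
  exact map_le_smul_top _ π (mem_map_of_mem hj)
end

section
/- If R is a ring such that R/Soc(R) is Artinian as a left R-module, then R satisfies (⋄), i.e., for every left ideal I such that R/I has an essential simple socle, R/I is Artinian. -/
/-!
The image of `Soc(R)` in `R/I` lies in `Soc(R/I)`, which is contained in the essential simple
submodule `S`. Hence `(R/I)/S` is a quotient of the Artinian module `R/Soc(R)`, and `R/I` is an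
extension of it by the simple, hence Artinian, module `S`.
-/

/-- The socle of a module: the sum of all its simple submodules. -/
def socle (R : Type u) (M : Type v) [Ring R] [AddCommGroup M] [Module R M] :
    Submodule R M :=
  sSup {S : Submodule R M | IsSimpleModule R S}

section

variable {R M N : Type*} [Ring R] [AddCommGroup M] [Module R M] [AddCommGroup N] [Module R N]

theorem Submodule.map_le_socle_of_isSimpleModule {T : Submodule R M} (hT : IsSimpleModule R T)
    (f : M →ₗ[R] N) : T.map f ≤ socle R N := by
  have hrange : LinearMap.range (f ∘ₗ T.subtype) = T.map f := by
    rw [LinearMap.range_comp, Submodule.range_subtype]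
  rcases LinearMap.injective_or_eq_zero (f ∘ₗ T.subtype) with hinj | hzero
  · refine le_sSup (?_ : IsSimpleModule R (T.map f))
    rw [← hrange]
    exact .congr (LinearEquiv.ofInjective _ hinj).symm
  · rw [← hrange, hzero, LinearMap.range_zero]
    exact bot_le

theorem map_socle_le_socle (f : M →ₗ[R] N) : (socle R M).map f ≤ socle R N :=
  Submodule.map_le_iff_le_comap.mpr <| sSup_le fun _ hT ↦
    Submodule.map_le_iff_le_comap.mp (Submodule.map_le_socle_of_isSimpleModule hT f)

theorem socle_le_of_isSimpleModule_of_essential {S : Submodule R M} [IsSimpleModule R S]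
    (hS : ∀ N : Submodule R M, N ≠ ⊥ → S ⊓ N ≠ ⊥) : socle R M ≤ S :=
  sSup_le fun T hT ↦ by
    have hatom : IsAtom T := isSimpleModule_iff_isAtom.mp hT
    have hinf : S ⊓ T = T := (hatom.le_iff.mp inf_le_right).resolve_left (hS T hatom.1)
    exact inf_eq_right.mp hinf

theorem isArtinian_quotient_of_map_le {K : Submodule R M} {P : Submodule R N}
    [IsArtinian R (M ⧸ K)] (f : M →ₗ[R] N) (hf : Function.Surjective f) (hKP : K.map f ≤ P) :
    IsArtinian R (N ⧸ P) := by
  refine isArtinian_of_surjective _ (K.mapQ P f (Submodule.map_le_iff_le_comap.mp hKP)) ?_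
  intro y
  obtain ⟨z, rfl⟩ := P.mkQ_surjective y
  obtain ⟨x, rfl⟩ := hf z
  exact ⟨K.mkQ x, rfl⟩

end

/-- If `R/Soc(R)` is Artinian as a left `R`-module, then `R` satisfies (⋄): for every
left ideal `I` such that `R/I` has an essential simple socle, `R/I` is Artinian. -/
theorem diamond_of_quotient_socle_artinian (R : Type u) [Ring R]
    (h : IsArtinian R (R ⧸ socle R R))
    (I : Ideal R)
    (hI : ∃ S : Submodule R (R ⧸ I), IsSimpleModule R S ∧
      ∀ N : Submodule R (R ⧸ I), N ≠ ⊥ → S ⊓ N ≠ ⊥) :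
    IsArtinian R (R ⧸ I) := by
  obtain ⟨S, hS, hess⟩ := hI
  have hsoc : (socle R R).map I.mkQ ≤ S :=
    (map_socle_le_socle I.mkQ).trans (socle_le_of_isSimpleModule_of_essential hess)
  have hquot : IsArtinian R ((R ⧸ I) ⧸ S) :=
    isArtinian_quotient_of_map_le I.mkQ I.mkQ_surjective hsoc
  exact (isArtinian_iff_submodule_quotient S).mpr ⟨inferInstance, hquot⟩
end

section
/- Let (R, m) be a commutative quasi-local ring. If R satisfies ⋂_{n≥0}(I + m^n) = I for every ideal I, and m/m^2 is a finitely generated R-module, then R is Noetherian. -/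
/-!
Choose `J ⊆ 𝔪` finitely generated with `𝔪 = J + 𝔪²`. Then `𝔪 ⊆ J + 𝔪ⁿ` for all `n`, so `𝔪 = J` by
the intersection hypothesis: `𝔪` is finitely generated, say by `x₁, …, x_r`. The associated graded
ring of `𝔪` is then a quotient of `k[X₁, …, X_r]`, `k = R/𝔪`, hence Noetherian. Given an ideal `I`,
pick a finitely generated `J ⊆ I` whose ideal of initial forms is maximal; it equals that of `I`,
so `I ⊆ J + 𝔪ⁿ` for every `n` by induction on `n`, and `I = J` by the intersection hypothesis.
-/

open MvPolynomial Finset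

namespace MvPolynomial

variable {R S σ : Type*} [CommRing R] [CommRing S]

section GradedAlgebra

attribute [local instance] MvPolynomial.gradedAlgebra

theorem homogeneousComponent_mul (p q : MvPolynomial σ R) (n : ℕ) :
    homogeneousComponent n (p * q) =
      ∑ ij ∈ antidiagonal n, homogeneousComponent ij.1 p * homogeneousComponent ij.2 q := by
  have h := DirectSum.coe_mul_apply_eq_sum_antidiagonal (homogeneousSubmodule σ R)
    (DirectSum.decompose _ p) (DirectSum.decompose _ q) n
  rw [← DirectSum.decompose_mul] at h
  simp only [← decomposition.decompose'_apply]
  exact h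

end GradedAlgebra

theorem IsHomogeneous.exists_map_eq {f : R →+* S} (hf : Function.Surjective f)
    {p : MvPolynomial σ S} {n : ℕ} (hp : p.IsHomogeneous n) :
    ∃ q : MvPolynomial σ R, q.IsHomogeneous n ∧ map f q = p := by
  obtain ⟨q, rfl⟩ := map_surjective f hf p
  refine ⟨homogeneousComponent n q, homogeneousComponent_isHomogeneous n q, ?_⟩
  ext d
  rw [coeff_map, coeff_homogeneousComponent]
  split_ifs with h
  · rw [coeff_map]
  · rw [map_zero, hp.coeff_eq_zero h]

theorem IsHomogeneous.eval_mem_mul_pow {p : MvPolynomial σ R} {n : ℕ} (hp : p.IsHomogeneous n)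
    (x : σ → R) {K : Ideal R} (hK : ∀ d, p.coeff d ∈ K) :
    eval x p ∈ K * Ideal.span (Set.range x) ^ n := by
  rw [p.as_sum, map_sum]
  refine Ideal.sum_mem _ fun d hd => ?_
  rw [← mul_one (p.coeff d), ← C_mul_monomial, map_mul, eval_C]
  refine Ideal.mul_mem_mul (hK d) ((Ideal.mem_span_pow_iff_exists_isHomogeneous x _).mpr
    ⟨_, isHomogeneous_monomial 1 ?_, rfl⟩)
  by_contra h
  exact mem_support_iff.mp hd (hp.coeff_eq_zero h)

theorem IsHomogeneous.eval_mem_pow_succ_of_map_eq_zero {m : Ideal R} {x : σ → R}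
    (hx : Ideal.span (Set.range x) ≤ m) {p : MvPolynomial σ R} {n : ℕ} (hp : p.IsHomogeneous n)
    (h : map (Ideal.Quotient.mk m) p = 0) : eval x p ∈ m ^ (n + 1) := by
  have hcoeff (d : σ →₀ ℕ) : p.coeff d ∈ m := by
    rw [← Ideal.Quotient.eq_zero_iff_mem, ← coeff_map, h, coeff_zero]
  rw [pow_succ']
  exact Ideal.mul_mono_right (Ideal.pow_right_mono hx n) (hp.eval_mem_mul_pow x hcoeff)

end MvPolynomial

theorem Submodule.exists_fg_sup_eq_top_of_finite_quotient {R M : Type*} [Ring R]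
    [AddCommGroup M] [Module R M] (N : Submodule R M) (h : Module.Finite R (M ⧸ N)) :
    ∃ P : Submodule R M, P.FG ∧ P ⊔ N = ⊤ := by
  obtain ⟨s, hs⟩ := h.fg_top
  choose g hg using N.mkQ_surjective
  refine ⟨span R (g '' s), fg_span (s.finite_toSet.image g), ?_⟩
  have hgN : N.mkQ ∘ g = id := funext hg
  rw [sup_comm, ← map_mkQ_eq_top, map_span, ← Set.image_comp, hgN, Set.image_id, hs]

namespace Ideal

variable {R : Type*} [CommRing R]

theorem le_of_forall_le_sup_pow {I J m : Ideal R} (hJ : ⨅ n : ℕ, (J + m ^ n) = J)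
    (h : ∀ n : ℕ, I ≤ J ⊔ m ^ n) : I ≤ J :=
  hJ ▸ le_iInf fun n => add_eq_sup (I := J) ▸ h n

theorem le_sup_pow_of_le_sup_sq {J m : Ideal R} (h : m ≤ J ⊔ m ^ 2) (n : ℕ) :
    m ≤ J ⊔ m ^ n := by
  induction n with
  | zero => simp [one_eq_top]
  | succ n ih =>
    calc m ≤ J ⊔ m * m := sq m ▸ h
      _ ≤ J ⊔ m * (J ⊔ m ^ n) := sup_le_sup_left (mul_mono_right ih) _
      _ ≤ J ⊔ m ^ (n + 1) := by
        rw [mul_sup, ← sup_assoc, pow_succ']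
        exact sup_le_sup_right (sup_le le_rfl mul_le_right) _

theorem le_sup_pow_of_inf_pow_le {I J m : Ideal R} (hJI : J ≤ I)
    (h : ∀ n : ℕ, I ⊓ m ^ n ≤ J ⊔ m ^ (n + 1)) (n : ℕ) : I ≤ J ⊔ m ^ n := by
  induction n with
  | zero => simp [one_eq_top]
  | succ n ih =>
    calc I = J ⊔ I ⊓ m ^ n := by
          rw [inf_comm, ← sup_inf_assoc_of_le _ hJI, inf_eq_right.mpr ih]
      _ ≤ J ⊔ m ^ (n + 1) := sup_le le_sup_left (h n)

theorem exists_fg_le_sup_sq (m : Ideal R)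
    (h : Module.Finite R (m ⧸ Submodule.comap m.subtype (m ^ 2))) :
    ∃ J ≤ m, J.FG ∧ m ≤ J ⊔ m ^ 2 := by
  obtain ⟨P, hP, hPN⟩ := Submodule.exists_fg_sup_eq_top_of_finite_quotient _ h
  refine ⟨P.map m.subtype, Submodule.map_subtype_le _ _, hP.map _, ?_⟩
  have hm := congrArg (Submodule.map m.subtype) hPN
  rw [Submodule.map_sup, Submodule.map_comap_subtype, Submodule.map_subtype_top] at hm
  exact hm.symm.le.trans (sup_le_sup_left inf_le_right _)

end Ideal

section InitialForms

variable {R σ : Type*} [CommRing R] (x : σ → R)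

/-- With `𝔪 = (x)`, the substitution `X ↦ x` makes `(R ⧸ 𝔪)[X]` a graded ring mapping onto
`gr_𝔪 R`; `IsInitialForm x J n p` says that `p` is a form of degree `n` whose image is the initial
form of an element of `(J + 𝔪ⁿ⁺¹) ∩ 𝔪ⁿ`. -/
def IsInitialForm (J : Ideal R) (n : ℕ) (p : MvPolynomial σ (R ⧸ Ideal.span (Set.range x))) :
    Prop :=
  ∃ f : MvPolynomial σ R, f.IsHomogeneous n ∧ map (Ideal.Quotient.mk _) f = p ∧
    eval x f ∈ J ⊔ Ideal.span (Set.range x) ^ (n + 1)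

variable {x}
variable {I J : Ideal R} {n : ℕ} {p q : MvPolynomial σ (R ⧸ Ideal.span (Set.range x))}

namespace IsInitialForm

theorem isHomogeneous (hp : IsInitialForm x J n p) : p.IsHomogeneous n :=
  let ⟨_, hf, hfp, _⟩ := hp
  hfp ▸ hf.map _

theorem zero : IsInitialForm x J n 0 :=
  ⟨0, isHomogeneous_zero _ _ _, map_zero _, by simp⟩

theorem add (hp : IsInitialForm x J n p) (hq : IsInitialForm x J n q) :
    IsInitialForm x J n (p + q) := by
  obtain ⟨f, hf, rfl, hfJ⟩ := hp
  obtain ⟨g, hg, rfl, hgJ⟩ := hq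
  exact ⟨f + g, hf.add hg, map_add _ _ _, by rw [map_add]; exact add_mem hfJ hgJ⟩

theorem mono (hp : IsInitialForm x I n p) (hIJ : I ≤ J) : IsInitialForm x J n p :=
  let ⟨f, hf, hfp, hfI⟩ := hp
  ⟨f, hf, hfp, sup_le_sup_right hIJ _ hfI⟩

theorem mul {c : MvPolynomial σ (R ⧸ Ideal.span (Set.range x))} {i : ℕ} (hc : c.IsHomogeneous i)
    (hp : IsInitialForm x J n p) : IsInitialForm x J (i + n) (c * p) := by
  obtain ⟨f, hf, rfl, hfJ⟩ := hp
  obtain ⟨h, hh, rfl⟩ := hc.exists_map_eq Ideal.Quotient.mk_surjective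
  refine ⟨h * f, hh.mul hf, map_mul _ _ _, ?_⟩
  have hmul : Ideal.span (Set.range x) ^ i * (J ⊔ Ideal.span (Set.range x) ^ (n + 1)) ≤
      J ⊔ Ideal.span (Set.range x) ^ (i + n + 1) := by
    rw [Ideal.mul_sup, add_assoc, pow_add _ i]
    gcongr
    exact Ideal.mul_le_right
  rw [map_mul]
  exact hmul (Ideal.mul_mem_mul
    ((Ideal.mem_span_pow_iff_exists_isHomogeneous x _).mpr ⟨h, hh, rfl⟩) hfJ)

theorem exists_mem_span_singleton (hp : IsInitialForm x I n p) :
    ∃ a ∈ I, IsInitialForm x (Ideal.span {a}) n p := by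
  obtain ⟨f, hf, hfp, hfI⟩ := hp
  obtain ⟨a, ha, e, he, hae⟩ := Submodule.mem_sup.mp hfI
  exact ⟨a, ha, f, hf, hfp, hae ▸ Submodule.add_mem_sup (Ideal.mem_span_singleton_self a) he⟩

theorem eval_mem_sup_pow_succ {g : MvPolynomial σ R} (hg : g.IsHomogeneous n)
    (h : IsInitialForm x J n (map (Ideal.Quotient.mk _) g)) :
    eval x g ∈ J ⊔ Ideal.span (Set.range x) ^ (n + 1) := by
  obtain ⟨f, hf, hfg, hfJ⟩ := h
  have hdiff : eval x (g - f) ∈ Ideal.span (Set.range x) ^ (n + 1) :=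
    (hg.sub hf).eval_mem_pow_succ_of_map_eq_zero le_rfl (by rw [map_sub, hfg, sub_self])
  rw [← sub_add_cancel (eval x g) (eval x f), ← map_sub]
  exact add_mem (Ideal.mem_sup_right hdiff) hfJ

end IsInitialForm

variable (x) in
/-- The preimage in `(R ⧸ 𝔪)[X]` of the ideal of initial forms of `J` in `gr_𝔪 R`. -/
def initialIdeal (J : Ideal R) : Ideal (MvPolynomial σ (R ⧸ Ideal.span (Set.range x))) where
  carrier := {p | ∀ n, IsInitialForm x J n (homogeneousComponent n p)}
  add_mem' hp hq n := by
    rw [map_add]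
    exact (hp n).add (hq n)
  zero_mem' n := by
    rw [map_zero]
    exact .zero
  smul_mem' c p hp n := by
    rw [smul_eq_mul, homogeneousComponent_mul]
    refine Finset.sum_induction _ (IsInitialForm x J n) (fun _ _ => IsInitialForm.add) .zero
      fun ij hij => ?_
    rw [← mem_antidiagonal.mp hij]
    exact (hp ij.2).mul (homogeneousComponent_isHomogeneous _ _)

theorem initialIdeal_mono (hIJ : I ≤ J) : initialIdeal x I ≤ initialIdeal x J :=
  fun _ hp n => (hp n).mono hIJ

theorem isInitialForm_iff_mem_initialIdeal (hp : p.IsHomogeneous n) :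
    IsInitialForm x J n p ↔ p ∈ initialIdeal x J := by
  refine ⟨fun h k => ?_, fun h => homogeneousComponent_eq_self hp ▸ h n⟩
  rw [homogeneousComponent_of_mem hp]
  split_ifs with hk
  · exact hk ▸ h
  · exact .zero

variable (x) in
theorem exists_fg_le_forall_isInitialForm [Finite σ]
    [IsNoetherianRing (R ⧸ Ideal.span (Set.range x))] (I : Ideal R) :
    ∃ J ≤ I, J.FG ∧ ∀ n p, IsInitialForm x I n p → IsInitialForm x J n p := by
  obtain ⟨J, ⟨hJI, hJ⟩, hmax⟩ := (wellFounded_gt.onFun (f := initialIdeal x)).has_min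
    {J | J ≤ I ∧ J.FG} ⟨⊥, bot_le, Submodule.fg_bot⟩
  refine ⟨J, hJI, hJ, fun n p hp => ?_⟩
  obtain ⟨a, haI, ha⟩ := hp.exists_mem_span_singleton
  have hJa : initialIdeal x J = initialIdeal x (J ⊔ Ideal.span {a}) :=
    (initialIdeal_mono le_sup_left).eq_of_not_lt <| hmax _
      ⟨sup_le hJI (Ideal.span_le.mpr (Set.singleton_subset_iff.mpr haI)),
        Submodule.FG.sup hJ (Submodule.fg_span_singleton a)⟩
  rw [isInitialForm_iff_mem_initialIdeal hp.isHomogeneous, hJa,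
    ← isInitialForm_iff_mem_initialIdeal hp.isHomogeneous]
  exact ha.mono le_sup_right

end InitialForms

namespace Ideal

variable {R : Type*} [CommRing R]

theorem exists_fg_le_forall_le_sup_pow {m : Ideal R} (hm : m.FG) [IsNoetherianRing (R ⧸ m)]
    (I : Ideal R) : ∃ J ≤ I, J.FG ∧ ∀ n : ℕ, I ≤ J ⊔ m ^ n := by
  obtain ⟨r, x, rfl⟩ := Submodule.fg_iff_exists_fin_generating_family.mp hm
  obtain ⟨J, hJI, hJ, hIJ⟩ := exists_fg_le_forall_isInitialForm x I
  refine ⟨J, hJI, hJ, le_sup_pow_of_inf_pow_le hJI fun n c hc => ?_⟩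
  obtain ⟨g, hg, rfl⟩ := (mem_span_pow_iff_exists_isHomogeneous x c).mp hc.2
  exact (hIJ n _ ⟨g, hg, rfl, mem_sup_left hc.1⟩).eval_mem_sup_pow_succ hg

theorem isNoetherianRing_of_fg_of_forall_iInf_add_pow_eq {m : Ideal R} (hm : m.FG)
    [IsNoetherianRing (R ⧸ m)] (h : ∀ I : Ideal R, ⨅ n : ℕ, (I + m ^ n) = I) :
    IsNoetherianRing R :=
  isNoetherianRing_iff_ideal_fg R |>.mpr fun I => by
    obtain ⟨J, hJI, hJ, hIJ⟩ := exists_fg_le_forall_le_sup_pow hm I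
    rwa [le_antisymm (le_of_forall_le_sup_pow (h J) hIJ) hJI]

end Ideal

open IsLocalRing in
/-- Let `(R, 𝔪)` be a commutative quasi-local ring.  If `⋂ₙ (I + 𝔪ⁿ) = I` for every
ideal `I` of `R` and `𝔪/𝔪²` is a finitely generated `R`-module, then `R` is
Noetherian. -/
theorem noetherian_of_krull_intersection_and_cotangent_fg (R : Type u) [CommRing R]
    [IsLocalRing R]
    (hint : ∀ I : Ideal R, ⨅ n : ℕ, (I + maximalIdeal R ^ n) = I)
    (hfg : Module.Finite R
      (↥(maximalIdeal R) ⧸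
        (Submodule.comap (maximalIdeal R).subtype (maximalIdeal R ^ 2)))) :
    IsNoetherianRing R := by
  obtain ⟨J, hJm, hJ, hmJ⟩ := (maximalIdeal R).exists_fg_le_sup_sq hfg
  have hm : maximalIdeal R = J :=
    le_antisymm (Ideal.le_of_forall_le_sup_pow (hint J) (Ideal.le_sup_pow_of_le_sup_sq hmJ)) hJm
  have : IsNoetherianRing (R ⧸ maximalIdeal R) :=
    inferInstanceAs (IsNoetherianRing (ResidueField R))
  exact Ideal.isNoetherianRing_of_fg_of_forall_iInf_add_pow_eq (hm ▸ hJ) hint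
end

section
/- Let R be a commutative ring, m a maximal ideal, and E = E(R/m) the injective hull of R/m as an R-module. If E is locally of finite length as an R_m-module, then for every x ∈ E the R-submodule Rx equals the R_m-submodule R_m x; in particular E is locally of finite length as an R-module. -/
/-!
An `R_𝔪`-module of finite length is killed by a power of the maximal ideal of `R_𝔪`, so each
`x ∈ E` is killed by some `𝔪 ^ n`. An element `s ∉ 𝔪` is invertible modulo `𝔪 ^ n`, so some
`t : R` satisfies `(t * s) • x = x`, and then `(a / s) • x = (t * a) • x`. Hence every
`R_𝔪`-multiple of an element of `E` is an `R`-multiple: `R`- and `R_𝔪`-submodules of `E`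
coincide, and finite length passes from `R_𝔪` to `R`.
-/

open IsLocalRing

theorem IsFiniteLength.exists_pow_maximalIdeal_le_annihilator {A M : Type*} [CommRing A]
    [IsLocalRing A] [AddCommGroup M] [Module A M] (h : IsFiniteLength A M) :
    ∃ n : ℕ, maximalIdeal A ^ n ≤ Module.annihilator A M := by
  induction h with
  | of_subsingleton =>
    exact ⟨0, fun _ _ => Module.mem_annihilator.mpr fun _ => Subsingleton.elim _ _⟩
  | @of_simple_quotient M _ _ N _ _ ih =>
    obtain ⟨n, hn⟩ := ih
    have hquot : maximalIdeal A ≤ Module.annihilator A (M ⧸ N) :=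
      (eq_maximalIdeal IsSimpleModule.annihilator_isMaximal).ge
    refine ⟨n + 1, pow_succ (maximalIdeal A) n ▸ Submodule.mul_le.mpr fun a ha b hb => ?_⟩
    refine Module.mem_annihilator.mpr fun y => ?_
    have hby : b • y ∈ N := by
      simpa [← Submodule.Quotient.mk_smul] using Module.mem_annihilator.mp (hquot hb) (N.mkQ y)
    rw [mul_smul]
    exact congrArg Subtype.val (Module.mem_annihilator.mp (hn ha) ⟨b • y, hby⟩)

theorem exists_mul_smul_eq_self_of_pow_le_torsionOf {R M : Type*} [CommRing R] [AddCommGroup M]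
    [Module R M] {m : Ideal R} [m.IsMaximal] {n : ℕ} {x : M} (hx : m ^ n ≤ Ideal.torsionOf R M x)
    {s : R} (hs : s ∉ m) : ∃ t : R, (t * s) • x = x := by
  obtain ⟨t, i, hi, hts⟩ := Ideal.IsMaximal.exists_inv_pow m hs n
  refine ⟨t, ?_⟩
  calc (t * s) • x = (t * s + i) • x := by
        rw [add_smul, (Ideal.mem_torsionOf_iff x i).mp (hx hi), add_zero]
    _ = x := by rw [hts, one_smul]

theorem IsLocalization.AtPrime.pow_le_torsionOf {R Rₘ M : Type*} [CommRing R] [CommRing Rₘ]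
    [Algebra R Rₘ] (m : Ideal R) [m.IsMaximal] [IsLocalization.AtPrime Rₘ m] [IsLocalRing Rₘ]
    [AddCommGroup M] [Module R M] [Module Rₘ M] [IsScalarTower R Rₘ M] {n : ℕ} {x : M}
    (hx : maximalIdeal Rₘ ^ n ≤ Ideal.torsionOf Rₘ M x) : m ^ n ≤ Ideal.torsionOf R M x := by
  rw [← IsLocalization.AtPrime.under_maximalIdeal_pow m Rₘ n]
  intro a ha
  simpa only [Ideal.mem_torsionOf_iff, algebraMap_smul] using hx ha

theorem IsLocalization.exists_smul_eq_smul {R Rₛ M : Type*} [CommRing R] [CommRing Rₛ]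
    [Algebra R Rₛ] (S : Submonoid R) [IsLocalization S Rₛ] [AddCommGroup M] [Module R M]
    [Module Rₛ M] [IsScalarTower R Rₛ M] {x : M} (hx : ∀ s ∈ S, ∃ t : R, (t * s) • x = x)
    (r : Rₛ) : ∃ a : R, r • x = a • x := by
  obtain ⟨⟨a, s⟩, hs⟩ := IsLocalization.surj S r
  obtain ⟨t, ht⟩ := hx s s.2
  refine ⟨t * a, ?_⟩
  calc r • x = r • ((t * s) • x) := by rw [ht]
    _ = t • (r * algebraMap R Rₛ s) • x := by
      rw [mul_smul, ← algebraMap_smul Rₛ (s : R) x, smul_comm r t, mul_smul]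
    _ = (t * a) • x := by rw [hs, algebraMap_smul, mul_smul]

theorem IsLocalization.AtPrime.exists_smul_eq_smul_of_isFiniteLength {R Rₘ M : Type*}
    [CommRing R] [CommRing Rₘ] [Algebra R Rₘ] (m : Ideal R) [m.IsMaximal]
    [IsLocalization.AtPrime Rₘ m] [AddCommGroup M] [Module R M] [Module Rₘ M] [IsScalarTower R Rₘ M] {x : M}
    (hx : IsFiniteLength Rₘ (Rₘ ∙ x)) (r : Rₘ) : ∃ a : R, r • x = a • x := by
  have := IsLocalization.AtPrime.isLocalRing Rₘ m
  obtain ⟨n, hn⟩ := hx.exists_pow_maximalIdeal_le_annihilator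
  have hxm : m ^ n ≤ Ideal.torsionOf R M x :=
    IsLocalization.AtPrime.pow_le_torsionOf (Rₘ := Rₘ) m
      (Ideal.annihilator_span_singleton_eq_torsionOf (R := Rₘ) x ▸ hn)
  exact IsLocalization.exists_smul_eq_smul m.primeCompl
    (fun _ hs => exists_mul_smul_eq_self_of_pow_le_torsionOf hxm hs) r

section RestrictScalars

variable {R S M : Type*} [CommRing R] [CommRing S] [Algebra R S] [AddCommGroup M] [Module R M]
  [Module S M] [IsScalarTower R S M] (h : ∀ (x : M) (s : S), ∃ r : R, s • x = r • x)
include h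

theorem Submodule.restrictScalars_surjective_of_forall_exists_smul_eq :
    Function.Surjective (Submodule.restrictScalars R : Submodule S M → Submodule R M) := by
  intro N
  refine ⟨{ N with smul_mem' := fun s x hx => ?_ }, rfl⟩
  obtain ⟨r, hr⟩ := h x s
  exact hr ▸ N.smul_mem r hx

theorem Submodule.restrictScalars_span_of_forall_exists_smul_eq (s : Set M) :
    (span S s).restrictScalars R = span R s := by
  obtain ⟨N, hN⟩ := restrictScalars_surjective_of_forall_exists_smul_eq h (span R s)
  refine le_antisymm ?_ (span_le_restrictScalars R S s)
  have hsN : s ⊆ N := by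
    rw [← coe_restrictScalars R N, hN]
    exact subset_span
  exact hN ▸ restrictScalars_mono R (span_le.mpr hsN)

theorem isFiniteLength_of_forall_exists_smul_eq (hM : IsFiniteLength S M) :
    IsFiniteLength R M := by
  rw [isFiniteLength_iff_isNoetherian_isArtinian] at hM ⊢
  obtain ⟨_, _⟩ := hM
  let e : Submodule S M ≃o Submodule R M :=
    RelIso.ofSurjective (Submodule.restrictScalarsEmbedding R S M)
      (Submodule.restrictScalars_surjective_of_forall_exists_smul_eq h)
  exact ⟨isNoetherian_mk e.symm.toOrderEmbedding.wellFoundedGT,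
    e.symm.toOrderEmbedding.wellFoundedLT⟩

theorem Submodule.isFiniteLength_restrictScalars_of_forall_exists_smul_eq (P : Submodule S M)
    (hP : IsFiniteLength S P) : IsFiniteLength R (P.restrictScalars R) :=
  ((P.restrictScalarsEquiv R S M).restrictScalars R).symm.isFiniteLength <|
    isFiniteLength_of_forall_exists_smul_eq (R := R) (M := P)
      (fun y s => (h y s).imp fun _ => Subtype.ext) hP

end RestrictScalars

theorem span_eq_span_localization_of_locally_finiteLength_general
    (R : Type u) [CommRing R] (m : Ideal R) [m.IsMaximal]
    (Rm : Type u) [CommRing Rm] [Algebra R Rm] [IsLocalization.AtPrime Rm m]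
    (E : Type u) [AddCommGroup E] [Module R E] [Module Rm E] [IsScalarTower R Rm E]
    (hloc : ∀ N : Submodule Rm E, N.FG → IsFiniteLength Rm N) :
    (∀ x : E, (Submodule.span R {x} : Set E) = (Submodule.span Rm {x} : Set E)) ∧
      (∀ N : Submodule R E, N.FG → IsFiniteLength R N) := by
  have key (x : E) (r : Rm) : ∃ a : R, r • x = a • x :=
    IsLocalization.AtPrime.exists_smul_eq_smul_of_isFiniteLength m
      (hloc _ (Submodule.fg_span_singleton x)) r
  refine ⟨fun x => ?_, ?_⟩
  · rw [← Submodule.restrictScalars_span_of_forall_exists_smul_eq key,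
      Submodule.coe_restrictScalars]
  · rintro N ⟨s, rfl⟩
    rw [← Submodule.restrictScalars_span_of_forall_exists_smul_eq key]
    exact Submodule.isFiniteLength_restrictScalars_of_forall_exists_smul_eq key _
      (hloc _ (Submodule.fg_span s.finite_toSet))

/-- Let `R` be a commutative ring, `𝔪` a maximal ideal, and `E = E(R/𝔪)` the injective
hull of `R/𝔪` as an `R`-module (an injective `R`-module with an essential simple
submodule isomorphic to `R/𝔪`), viewed also as a module over the localization
`R_𝔪`.  If `E` is locally of finite length as an `R_𝔪`-module, then for every `x ∈ E`
the `R`-submodule `Rx` equals the `R_𝔪`-submodule `R_𝔪 x`; in particular `E` is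
locally of finite length as an `R`-module. -/
theorem span_eq_span_localization_of_locally_finiteLength
    (R : Type u) [CommRing R] (m : Ideal R) [m.IsMaximal]
    (Rm : Type u) [CommRing Rm] [Algebra R Rm] [IsLocalization.AtPrime Rm m]
    (E : Type u) [AddCommGroup E] [Module R E] [Module Rm E] [IsScalarTower R Rm E]
    (hinj : Module.Injective R E)
    (hhull : ∃ S : Submodule R E,
      (∀ N : Submodule R E, N ≠ ⊥ → S ⊓ N ≠ ⊥) ∧ Nonempty (S ≃ₗ[R] R ⧸ m))
    (hloc : ∀ N : Submodule Rm E, N.FG → IsFiniteLength Rm N) :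
    (∀ x : E, (Submodule.span R {x} : Set E) = (Submodule.span Rm {x} : Set E)) ∧
      (∀ N : Submodule R E, N.FG → IsFiniteLength R N) :=
  span_eq_span_localization_of_locally_finiteLength_general R m Rm E hloc
end

section
/- Let (R, m) be a commutative quasi-local ring with m^3 = 0. If m/Soc(R) is finitely generated as an R-module, then R satisfies (⋄). -/
/-!
Let `M` be a finitely generated `R`-module with an essential simple submodule `S`. An element
`y` killed by `𝔪` spans a submodule meeting `S` in a nonzero multiple `c • y`; then `c ∉ 𝔪`
is a unit, so `y ∈ S`. As `𝔪³ = 0`, this gives `𝔪²M ⊆ S`. Hence both factors of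
`S ⊆ S + 𝔪M ⊆ M` are killed by `𝔪`, i.e. are `R/𝔪`-vector spaces, and both are finitely
generated: the top one because `M` is, the middle one because for each generator `x` the map
`a ↦ a • x mod S` on `𝔪` kills `Soc(R) = Ann(𝔪)`, so its image is a quotient of
`𝔪/Soc(R)`. Together with the simple module `S`, this makes `M` Artinian.
-/

def Submodule.IsEssential {R M : Type*} [Ring R] [AddCommGroup M] [Module R M]
    (S : Submodule R M) : Prop :=
  ∀ N : Submodule R M, N ≠ ⊥ → S ⊓ N ≠ ⊥

theorem Module.IsTorsionBySet.isArtinian {R N : Type*} [CommRing R] [AddCommGroup N]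
    [Module R N] [Module.Finite R N] {p : Ideal R} [p.IsMaximal]
    (h : Module.IsTorsionBySet R N p) : IsArtinian R N := by
  let : Field (R ⧸ p) := Ideal.Quotient.field p
  let := h.module
  have : IsSemisimpleModule R N := h.isSemisimpleModule_iff.mp inferInstance
  infer_instance

theorem Submodule.isArtinian_of_smul_le {R M : Type*} [CommRing R] [AddCommGroup M]
    [Module R M] {p : Ideal R} [p.IsMaximal] {P Q : Submodule R M} [IsArtinian R P]
    (hPQ : P ≤ Q) (hsmul : p • Q ≤ P) (hfg : (Q.map P.mkQ).FG) : IsArtinian R Q := by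
  let P' := P.comap Q.subtype
  let g := P.mkQ ∘ₗ Q.subtype
  have : IsArtinian R P' := isArtinian_of_linearEquiv (comapSubtypeEquivOfLe hPQ).symm
  have hker : LinearMap.ker g = P' := by rw [LinearMap.ker_comp, ker_mkQ]
  have : Module.Finite R (Q ⧸ P') := by
    have : Module.Finite R (LinearMap.range g) := by
      rwa [LinearMap.range_comp, range_subtype, Module.Finite.iff_fg]
    exact .equiv ((quotEquivOfEq _ _ hker).symm ≪≫ₗ g.quotKerEquivRange).symm
  have htors : Module.IsTorsionBySet R (Q ⧸ P') p :=
    (Module.isTorsionBySet_quotient_iff _ _).mpr fun x r hr =>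
      hsmul (smul_mem_smul hr x.2)
  exact (isArtinian_iff_submodule_quotient P').mpr ⟨‹_›, htors.isArtinian⟩

section IsLocalRing

open IsLocalRing

variable {R M : Type*} [CommRing R] [IsLocalRing R] [AddCommGroup M] [Module R M]

theorem Submodule.IsEssential.mem_of_maximalIdeal_smul_eq_zero {S : Submodule R M}
    (hS : S.IsEssential) {y : M} (hy : ∀ r ∈ maximalIdeal R, r • y = 0) : y ∈ S := by
  by_cases hy0 : y = 0
  · exact hy0 ▸ S.zero_mem
  obtain ⟨z, hz, hz0⟩ := (Submodule.ne_bot_iff _).mp (hS (span R {y}) (by simpa using hy0))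
  obtain ⟨hzS, c, rfl⟩ := And.imp_right mem_span_singleton.mp (mem_inf.mp hz)
  have hc : IsUnit c := by
    by_contra hc
    exact hz0 (hy c ((mem_maximalIdeal c).mpr hc))
  simpa [smul_smul] using S.smul_mem (↑hc.unit⁻¹ : R) hzS

theorem Submodule.IsEssential.fg_map_mkQ_maximalIdeal_smul {S : Submodule R M}
    (hS : S.IsEssential) (hfg : Module.Finite R (↥(maximalIdeal R) ⧸
      (Submodule.comap (maximalIdeal R).subtype (maximalIdeal R).annihilator)))
    {N : Submodule R M} (hN : N.FG) : ((maximalIdeal R • N).map S.mkQ).FG := by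
  induction N, hN using Submodule.fg_induction with
  | singleton x =>
    let f := S.mkQ ∘ₗ LinearMap.toSpanSingleton R M x ∘ₗ (maximalIdeal R).subtype
    have hsoc : Submodule.comap (maximalIdeal R).subtype (maximalIdeal R).annihilator ≤
        LinearMap.ker f := by
      intro a ha
      have hann : ∀ r ∈ maximalIdeal R, a.1 * r = 0 := mem_annihilator.mp ha
      refine (Quotient.mk_eq_zero S).mpr (hS.mem_of_maximalIdeal_smul_eq_zero fun r hr => ?_)
      simp [smul_smul, mul_comm r, hann r hr]
    have hrange : LinearMap.range f = (maximalIdeal R • span R {x}).map S.mkQ := by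
      rw [map_smul'', map_span, Set.image_singleton]
      ext y
      simp [f, mem_smul_span_singleton]
    rw [← hrange, ← range_liftQ _ f hsoc, ← Module.Finite.iff_fg]
    exact Module.Finite.range _
  | sup N₁ N₂ _ _ h₁ h₂ =>
    rw [smul_sup, map_sup]
    exact h₁.sup h₂

theorem isArtinian_of_isEssential_of_isSimpleModule (hm3 : maximalIdeal R ^ 3 = ⊥)
    (hfg : Module.Finite R (↥(maximalIdeal R) ⧸
      (Submodule.comap (maximalIdeal R).subtype (maximalIdeal R).annihilator)))
    [Module.Finite R M] {S : Submodule R M} [IsSimpleModule R S] (hS : S.IsEssential) :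
    IsArtinian R M := by
  set m := maximalIdeal R
  have hsq : m • m • (⊤ : Submodule R M) ≤ S := by
    refine Submodule.smul_le.mpr fun a ha y hy =>
      hS.mem_of_maximalIdeal_smul_eq_zero fun r hr => ?_
    have : r • a • y ∈ (m ^ 3) • (⊤ : Submodule R M) := by
      rw [pow_succ', pow_two, Submodule.mul_smul, Submodule.mul_smul]
      exact Submodule.smul_mem_smul hr (Submodule.smul_mem_smul ha hy)
    simpa [hm3] using this
  have : IsArtinian R ↥(S ⊔ m • ⊤) := by
    refine Submodule.isArtinian_of_smul_le (p := m) le_sup_left ?_ ?_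
    · rw [Submodule.smul_sup]
      exact sup_le Submodule.smul_le_right hsq
    · rw [Submodule.map_sup, Submodule.mkQ_map_self, bot_sup_eq]
      exact hS.fg_map_mkQ_maximalIdeal_smul hfg Module.Finite.fg_top
  have : IsArtinian R (⊤ : Submodule R M) :=
    Submodule.isArtinian_of_smul_le (p := m) le_top (le_sup_right (a := S))
      (Module.Finite.fg_top.map _)
  exact isArtinian_of_linearEquiv Submodule.topEquiv

end IsLocalRing

open IsLocalRing in
/-- Let `(R, 𝔪)` be a commutative quasi-local ring with `𝔪³ = 0`.  If
`𝔪/Soc(R)` (where `Soc(R) = Ann(𝔪)`) is finitely generated as an `R`-module, then `R`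
satisfies (⋄): every cyclic `R`-module `R/I` with essential simple socle is Artinian. -/
theorem diamond_of_maximalIdeal_mod_socle_fg (R : Type u) [CommRing R] [IsLocalRing R]
    (hm3 : maximalIdeal R ^ 3 = ⊥)
    (hfg : Module.Finite R
      (↥(maximalIdeal R) ⧸
        (Submodule.comap (maximalIdeal R).subtype (maximalIdeal R).annihilator)))
    (I : Ideal R)
    (hI : ∃ S : Submodule R (R ⧸ I), IsSimpleModule R S ∧
      ∀ N : Submodule R (R ⧸ I), N ≠ ⊥ → S ⊓ N ≠ ⊥) :
    IsArtinian R (R ⧸ I) := by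
  obtain ⟨S, _, hS⟩ := hI
  exact isArtinian_of_isEssential_of_isSimpleModule hm3 hfg (S := S) hS
end

section
/- Let (R, m) be a commutative quasi-local ring with m^3 = 0 and assume Soc(R) is finitely generated. Then R satisfies (⋄) if and only if m/Soc(R) is finitely generated as an R-module. -/
/-!
Since `𝔪² ⊆ Soc(R)` and `Soc(R)` is finitely generated, `𝔪²` is a finite-dimensional
`R/𝔪`-vector space, and a module killed by `𝔪` is Artinian iff it is finitely generated.

If `𝔪/Soc(R)` is finitely generated, then `𝔪`, hence `R`, is Artinian.
Conversely, for a hyperplane `W` of `𝔪²` pick `I` with `I ∩ 𝔪² = W` and `I + 𝔪² = (W : 𝔪)`.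
Then `(W : 𝔪)/I ≅ 𝔪²/W` is simple, and it is an essential submodule of `R/I` because `𝔪` is
nilpotent, so (⋄) makes `R/(W : 𝔪)`, and with it `𝔪/(W : 𝔪)`, Artinian. Finitely many
hyperplanes of `𝔪²` intersect in `0`, and `(· : 𝔪)` commutes with intersections, so
`𝔪/(0 : 𝔪) = 𝔪/Soc(R)` is Artinian as well.
-/

open IsLocalRing Submodule

theorem ComplementedLattice.bot_induction {α : Type*} [Lattice α] [BoundedOrder α]
    [IsModularLattice α] [ComplementedLattice α] [WellFoundedLT α] {Q : α → Prop} (htop : Q ⊤)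
    (hcoatom : ∀ c, IsCoatom c → Q c) (hinf : ∀ a b, Q a → Q b → Q (a ⊓ b)) : Q ⊥ := by
  obtain ⟨a, hQa, hmin⟩ := wellFounded_lt.has_min {a | Q a} ⟨⊤, htop⟩
  obtain rfl | ⟨t, ht, hta⟩ := eq_bot_or_exists_atom_le a
  · exact hQa
  obtain ⟨c, htc⟩ := exists_isCompl t
  have hac : ¬ a ≤ c := fun hac => ht.1 (htc.disjoint.eq_bot_of_le (hta.trans hac))
  exact (hmin _ (hinf a c hQa (hcoatom c (htc.isAtom_iff_isCoatom.mp ht)))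
    (inf_lt_left.mpr hac)).elim

namespace Submodule

variable {R M : Type*} [Ring R] [AddCommGroup M] [Module R M]

def IsEssential_s13 (S : Submodule R M) : Prop :=
  ∀ N : Submodule R M, N ≠ ⊥ → S ⊓ N ≠ ⊥

theorem exists_inf_eq_and_sup_eq {A B C : Submodule R M} (hAB : A ≤ B) (hBC : B ≤ C)
    [IsSemisimpleModule R (C.map A.mkQ)] : ∃ D : Submodule R M, D ⊓ B = A ∧ D ⊔ B = C := by
  obtain ⟨D', -, hdisj, hsup⟩ := Set.Iic.complementedLattice_iff.mp
    ((C.map A.mkQ).mapIic.complementedLattice_iff.mp inferInstance) _ (map_mono hBC)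
  refine ⟨D'.comap A.mkQ, ?_, ?_⟩
  · rw [← sup_eq_right.mpr hAB, ← comap_map_mkQ, ← comap_inf, inf_comm, hdisj, comap_bot, ker_mkQ]
  · calc D'.comap A.mkQ ⊔ B = ((D'.comap A.mkQ ⊔ B).map A.mkQ).comap A.mkQ := by
          rw [comap_map_mkQ, sup_eq_right.mpr (hAB.trans le_sup_right)]
      _ = (C.map A.mkQ).comap A.mkQ := by
          rw [map_sup, map_comap_eq_of_surjective A.mkQ_surjective, sup_comm, hsup]
      _ = C := by rw [comap_map_mkQ, sup_eq_right.mpr (hAB.trans hBC)]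

theorem isSimpleModule_map_mkQ_iff {p q : Submodule R M} (hpq : p ≤ q) :
    IsSimpleModule R (q.map p.mkQ) ↔ p ⋖ q := by
  rw [isSimpleModule_iff_isAtom, ← (comapMkQRelIso p).isAtom_iff, Set.Ici.isAtom_iff]
  simp [comapMkQRelIso, comap_map_mkQ, sup_eq_right.mpr hpq]

theorem isArtinian_quotient_inf (p q : Submodule R M) [IsArtinian R (M ⧸ p)]
    [IsArtinian R (M ⧸ q)] : IsArtinian R (M ⧸ (p ⊓ q)) := by
  have hker : LinearMap.ker (p.mkQ.prod q.mkQ) = p ⊓ q := by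
    rw [LinearMap.ker_prod, ker_mkQ, ker_mkQ]
  exact isArtinian_of_injective ((p ⊓ q).liftQ _ hker.ge)
    (LinearMap.ker_eq_bot.mp (ker_liftQ_eq_bot _ _ _ hker.le))

theorem isArtinian_quotient_comap_subtype (N P : Submodule R M) [IsArtinian R (M ⧸ P)] :
    IsArtinian R (N ⧸ P.comap N.subtype) := by
  have hker : LinearMap.ker (P.mkQ ∘ₗ N.subtype) = P.comap N.subtype := by
    rw [LinearMap.ker_comp, ker_mkQ]
  exact isArtinian_of_injective ((P.comap N.subtype).liftQ _ hker.ge)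
    (LinearMap.ker_eq_bot.mp (ker_liftQ_eq_bot _ _ _ hker.le))

theorem isArtinian_of_isArtinian_quotient_comap_subtype {N P : Submodule R M}
    [IsArtinian R P] [IsArtinian R (N ⧸ P.comap N.subtype)] : IsArtinian R N :=
  (isArtinian_iff_submodule_quotient (P.comap N.subtype)).mpr
    ⟨isArtinian_of_injective (N.subtype.restrict fun _ hx => hx) fun _ _ h => by
      ext; exact (Subtype.ext_iff.mp h :), ‹_›⟩

end Submodule

section CommRing

variable {R : Type*} [CommRing R]

theorem Ideal.exists_smul_ne_zero_of_pow_smul_eq_zero {M : Type*} [AddCommGroup M] [Module R M]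
    {J : Ideal R} {n : ℕ} {v : M} (hv : v ≠ 0) (hJv : ∀ a ∈ J ^ n, a • v = 0) :
    ∃ r : R, r • v ≠ 0 ∧ ∀ x ∈ J, x • r • v = 0 := by
  induction n generalizing v with
  | zero => exact (hv (by simpa using hJv 1 (by simp))).elim
  | succ n ih =>
    by_cases hJ : ∀ x ∈ J, x • v = 0
    · exact ⟨1, by rwa [one_smul], by simpa using hJ⟩
    push Not at hJ
    obtain ⟨y, hyJ, hyv⟩ := hJ
    obtain ⟨r, hr, hrJ⟩ := ih hyv fun a ha => by
      rw [smul_smul]; exact hJv _ (pow_succ J n ▸ Ideal.mul_mem_mul ha hyJ)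
    exact ⟨r * y, by rwa [mul_smul], by simpa [mul_smul] using hrJ⟩

theorem Ideal.isTorsionBySet_annihilator (J : Ideal R) :
    Module.IsTorsionBySet R J.annihilator J := fun ⟨a, ha⟩ ⟨x, hx⟩ =>
  Subtype.ext (by simpa [mul_comm] using mem_annihilator.mp ha x hx)

end CommRing

section IsLocalRing

variable {R : Type*} [CommRing R] [IsLocalRing R]

local notation "𝔪" => maximalIdeal R

theorem isSemisimpleModule_of_isTorsionBySet_maximalIdeal {M : Type*} [AddCommGroup M]
    [Module R M] (h : Module.IsTorsionBySet R M 𝔪) : IsSemisimpleModule R M :=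
  letI := Ideal.Quotient.field 𝔪
  letI := h.module
  h.isSemisimpleModule_iff.mp inferInstance

theorem isArtinian_iff_finite_of_isTorsionBySet_maximalIdeal {M : Type*} [AddCommGroup M]
    [Module R M] (h : Module.IsTorsionBySet R M 𝔪) : IsArtinian R M ↔ Module.Finite R M :=
  have := isSemisimpleModule_of_isTorsionBySet_maximalIdeal h
  IsSemisimpleModule.finite_tfae.out 2 0

theorem sq_maximalIdeal_le_annihilator (hm3 : 𝔪 ^ 3 = ⊥) : 𝔪 ^ 2 ≤ (𝔪).annihilator := by
  intro a ha
  rw [mem_annihilator]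
  intro x hx
  have := Ideal.mul_mem_mul ha hx
  rwa [← pow_succ, hm3, Ideal.mem_bot] at this

theorem isTorsionBySet_maximalIdeal_quotient_annihilator (hm3 : 𝔪 ^ 3 = ⊥) :
    Module.IsTorsionBySet R (𝔪 ⧸ Submodule.comap (𝔪).subtype (𝔪).annihilator) 𝔪 :=
  (Module.isTorsionBySet_quotient_iff _ _).mpr fun y _ hx =>
    sq_maximalIdeal_le_annihilator hm3 (pow_two 𝔪 ▸ Ideal.mul_mem_mul hx y.2)

theorem colon_maximalIdeal_eq_inf_sq_colon {I : Ideal R} (hI : ¬ 𝔪 ^ 2 ≤ I) :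
    I.colon 𝔪 = (I ⊓ 𝔪 ^ 2).colon 𝔪 := by
  refine le_antisymm (fun x hx => ?_) (colon_mono inf_le_left le_rfl)
  rw [inf_colon]
  refine ⟨hx, mem_colon.mpr fun y hy => ?_⟩
  by_cases hxm : x ∈ 𝔪
  · exact pow_two 𝔪 ▸ Ideal.mul_mem_mul hxm hy
  · exact (hI fun z hz => (Ideal.unit_mul_mem_iff_mem I (notMem_maximalIdeal.mp hxm)).mp
      (mem_colon.mp hx z (Ideal.pow_le_self two_ne_zero hz))).elim

theorem exists_isSimpleModule_isEssential_of_covBy (hm3 : 𝔪 ^ 3 = ⊥) {I W : Ideal R}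
    (hW : W ⋖ 𝔪 ^ 2) (hinf : I ⊓ 𝔪 ^ 2 = W) (hsup : I ⊔ 𝔪 ^ 2 = W.colon 𝔪) :
    ∃ S : Submodule R (R ⧸ I), IsSimpleModule R S ∧ S.IsEssential_s13 := by
  refine ⟨Submodule.map I.mkQ (I ⊔ 𝔪 ^ 2), (isSimpleModule_map_mkQ_iff le_sup_left).mpr
    (covBy_sup_of_inf_covBy_right (hinf ▸ hW)), fun N hN => ?_⟩
  obtain ⟨v, hvN, hv⟩ := N.ne_bot_iff.mp hN
  obtain ⟨r, hr, hrm⟩ := Ideal.exists_smul_ne_zero_of_pow_smul_eq_zero (J := 𝔪) (n := 3) hv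
    fun a ha => by rw [hm3, Ideal.mem_bot] at ha; rw [ha, zero_smul]
  obtain ⟨y, hy⟩ := Submodule.Quotient.mk_surjective I (r • v)
  have hyI : y ∈ I.colon 𝔪 := mem_colon.mpr fun x hx => by
    rw [smul_eq_mul, mul_comm, ← smul_eq_mul, ← Submodule.Quotient.mk_eq_zero,
      Submodule.Quotient.mk_smul, hy]
    exact hrm x hx
  have hI : ¬ 𝔪 ^ 2 ≤ I := fun h => hW.lt.ne (hinf ▸ inf_eq_right.mpr h)
  -- the socle `(I : 𝔪)/I` of `R/I` is `(W : 𝔪)/I = S`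
  rw [colon_maximalIdeal_eq_inf_sq_colon hI, hinf, ← hsup] at hyI
  exact (Submodule.ne_bot_iff _).mpr ⟨r • v, ⟨hy ▸ mem_map_of_mem hyI, N.smul_mem r hvN⟩, hr⟩

theorem isArtinian_quotient_colon_of_covBy (hm3 : 𝔪 ^ 3 = ⊥)
    (hdiamond : ∀ I : Ideal R, (∃ S : Submodule R (R ⧸ I), IsSimpleModule R S ∧ S.IsEssential_s13) →
      IsArtinian R (R ⧸ I))
    {W : Ideal R} (hW : W ⋖ 𝔪 ^ 2) :
    IsArtinian R (𝔪 ⧸ Submodule.comap (𝔪).subtype (W.colon 𝔪)) := by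
  have hsq : 𝔪 ^ 2 ≤ W.colon 𝔪 := fun a ha => mem_colon.mpr fun x hx =>
    (mem_annihilator.mp (sq_maximalIdeal_le_annihilator hm3 ha) x hx).symm ▸ W.zero_mem
  have : IsSemisimpleModule R (Submodule.map W.mkQ (W.colon 𝔪)) := by
    refine isSemisimpleModule_of_isTorsionBySet_maximalIdeal fun ⟨z, hz⟩ ⟨x, hx⟩ => ?_
    obtain ⟨c, hc, rfl⟩ := mem_map.mp hz
    ext
    rw [coe_smul, ← map_smul, mkQ_apply, coe_zero, Submodule.Quotient.mk_eq_zero, smul_eq_mul,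
      mul_comm]
    exact mem_colon.mp hc x hx
  obtain ⟨I, hinf, hsup⟩ := exists_inf_eq_and_sup_eq hW.le hsq
  have := hdiamond I (exists_isSimpleModule_isEssential_of_covBy hm3 hW hinf hsup)
  have : IsArtinian R (R ⧸ W.colon 𝔪) :=
    isArtinian_of_surjective _ _ (factor_surjective (hsup ▸ le_sup_left))
  exact isArtinian_quotient_comap_subtype _ _

theorem isArtinian_quotient_annihilator_of_diamond (hm3 : 𝔪 ^ 3 = ⊥)
    [IsArtinian R (𝔪).annihilator]
    (hdiamond : ∀ I : Ideal R, (∃ S : Submodule R (R ⧸ I), IsSimpleModule R S ∧ S.IsEssential_s13) →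
      IsArtinian R (R ⧸ I)) :
    IsArtinian R (𝔪 ⧸ Submodule.comap (𝔪).subtype (𝔪).annihilator) := by
  have hsq := sq_maximalIdeal_le_annihilator hm3
  have : IsArtinian R ↥(𝔪 ^ 2) := isArtinian_of_le hsq
  have : IsSemisimpleModule R ↥(𝔪 ^ 2) :=
    isSemisimpleModule_of_isTorsionBySet_maximalIdeal fun ⟨z, hz⟩ ⟨x, hx⟩ =>
      Subtype.ext (by simpa [mul_comm] using mem_annihilator.mp (hsq hz) x hx)
  have : WellFoundedLT (Set.Iic (𝔪 ^ 2)) := (𝔪 ^ 2).mapIic.symm.strictMono.wellFoundedLT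
  have : ComplementedLattice (Set.Iic (𝔪 ^ 2)) :=
    (𝔪 ^ 2).mapIic.complementedLattice_iff.mp inferInstance
  have hinf (W W' : Ideal R)
      (_ : IsArtinian R (𝔪 ⧸ Submodule.comap (𝔪).subtype (W.colon 𝔪)))
      (_ : IsArtinian R (𝔪 ⧸ Submodule.comap (𝔪).subtype (W'.colon 𝔪))) :
      IsArtinian R (𝔪 ⧸ Submodule.comap (𝔪).subtype ((W ⊓ W').colon 𝔪)) := by
    rw [inf_colon, comap_inf]
    exact isArtinian_quotient_inf _ _
  have key := ComplementedLattice.bot_induction (α := Set.Iic (𝔪 ^ 2))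
    (Q := fun W => IsArtinian R (𝔪 ⧸ Submodule.comap (𝔪).subtype ((W : Ideal R).colon 𝔪)))
    ?top (fun W hW => isArtinian_quotient_colon_of_covBy hm3 hdiamond (Set.Iic.isCoatom_iff.mp hW))
    (fun W W' => hinf W W')
  · rwa [Set.Iic.coe_bot, bot_colon] at key
  · rw [Set.Iic.coe_top, comap_subtype_eq_top.mpr fun x hx => mem_colon.mpr fun y hy =>
      pow_two 𝔪 ▸ Ideal.mul_mem_mul hx hy]
    infer_instance

theorem isArtinianRing_of_isArtinian_quotient_annihilator [IsArtinian R (𝔪).annihilator]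
    [IsArtinian R (𝔪 ⧸ Submodule.comap (𝔪).subtype (𝔪).annihilator)] : IsArtinianRing R := by
  have : IsArtinian R 𝔪 := isArtinian_of_isArtinian_quotient_comap_subtype (P := (𝔪).annihilator)
  have : IsArtinian R (R ⧸ 𝔪) :=
    (isArtinian_iff_finite_of_isTorsionBySet_maximalIdeal
      ((Module.isTorsionBySet_quotient_iff _ _).mpr fun y x hx => Ideal.mul_mem_right y _ hx)).mpr
      inferInstance
  exact (isArtinian_iff_submodule_quotient 𝔪).mpr ⟨‹_›, ‹_›⟩

end IsLocalRing

open IsLocalRing in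
/-- Let `(R, 𝔪)` be a commutative quasi-local ring with `𝔪³ = 0` whose socle
`Soc(R) = Ann(𝔪)` is finitely generated.  Then `R` satisfies (⋄) (every cyclic
`R`-module with essential simple socle is Artinian) if and only if `𝔪/Soc(R)` is
finitely generated as an `R`-module. -/
theorem diamond_iff_maximalIdeal_mod_socle_fg (R : Type u) [CommRing R] [IsLocalRing R]
    (hm3 : maximalIdeal R ^ 3 = ⊥)
    (hsoc : (maximalIdeal R).annihilator.FG) :
    (∀ I : Ideal R,
        (∃ S : Submodule R (R ⧸ I), IsSimpleModule R S ∧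
          ∀ N : Submodule R (R ⧸ I), N ≠ ⊥ → S ⊓ N ≠ ⊥) →
        IsArtinian R (R ⧸ I)) ↔
      Module.Finite R
        (↥(maximalIdeal R) ⧸
          (Submodule.comap (maximalIdeal R).subtype (maximalIdeal R).annihilator)) := by
  have : IsArtinian R (maximalIdeal R).annihilator :=
    (isArtinian_iff_finite_of_isTorsionBySet_maximalIdeal
      (maximalIdeal R).isTorsionBySet_annihilator).mpr (Module.Finite.iff_fg.mpr hsoc)
  rw [← isArtinian_iff_finite_of_isTorsionBySet_maximalIdeal
    (isTorsionBySet_maximalIdeal_quotient_annihilator hm3)]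
  refine ⟨isArtinian_quotient_annihilator_of_diamond hm3, fun _ I _ => ?_⟩
  have := isArtinianRing_of_isArtinian_quotient_annihilator (R := R)
  infer_instance
end

section
/- Let F be a field of characteristic zero, A = F[x], μ : A × A → A the multiplication, and f : A → F the linear map with f(x^n) = 1/(n+1) for all n ≥ 0. Then the kernel of f contains no nonzero ideal of A; equivalently, for every nonzero a ∈ A there exists m ≥ 0 with f(x^m · a) ≠ 0. -/
open Polynomial Finset

/-!
`f (X ^ m * a) = ∑ₖ aₖ / (m + k + 1)` is the value at `t = m` of the rational function
`∑ₖ aₖ / (t + k + 1)`. Vanishing at infinitely many points forces it to vanish identically, and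
since its poles `-(k + 1)` are distinct, all the `aₖ` vanish.
-/

theorem Polynomial.map_X_pow_mul_eq_sum {R M : Type*} [CommSemiring R] [AddCommMonoid M]
    [Module R M] (f : R[X] →ₗ[R] M) (m : ℕ) (p : R[X]) :
    f (X ^ m * p) = ∑ n ∈ p.support, p.coeff n • f (X ^ (m + n)) := by
  conv_lhs => rw [p.as_sum_support_C_mul_X_pow, mul_sum, map_sum]
  refine sum_congr rfl fun n _ => ?_
  rw [mul_left_comm, ← pow_add, ← smul_eq_C_mul, map_smul]

theorem Lagrange.eq_zero_of_sum_mul_inv_sub_eq_zero {F ι : Type*} [Field F] [DecidableEq ι]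
    {s : Finset ι} {v : ι → F} (hvs : Set.InjOn v s) (w : ι → F) {S : Set F} (hS : S.Infinite)
    (h : ∀ x ∈ S, ∑ i ∈ s, w i * (x - v i)⁻¹ = 0) :
    ∀ i ∈ s, w i = 0 := by
  -- The interpolant through the values `wᵢ / nodalWeight` is `nodal s v * ∑ wᵢ (X - vᵢ)⁻¹`.
  set r : ι → F := fun i => w i / nodalWeight s v i
  have hroots : S \ v '' s ⊆ {x | IsRoot (interpolate s v r) x} := by
    rintro x ⟨hxS, hxv⟩
    have hx : ∀ i ∈ s, x ≠ v i := fun i hi hxi => hxv ⟨i, hi, hxi.symm⟩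
    rw [Set.mem_ofPred_eq, IsRoot, eval_interpolate_not_at_node r hx, ← mul_zero (eval x _),
      ← h x hxS]
    refine congrArg _ (sum_congr rfl fun i hi => ?_)
    rw [mul_comm _ (r i), ← mul_assoc, div_mul_cancel₀ _ (nodalWeight_ne_zero hvs hi)]
  have hzero : interpolate s v r = 0 :=
    eq_zero_of_infinite_isRoot _ ((hS.sdiff (s.finite_toSet.image v)).mono hroots)
  intro i hi
  have hri : r i = 0 := by rw [← eval_interpolate_at_node r hvs hi, hzero, eval_zero]
  exact (div_eq_zero_iff.mp hri).resolve_right (nodalWeight_ne_zero hvs hi)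

/-- Let `F` be a field of characteristic zero, `A = F[x]`, and `f : A → F` the linear
map with `f(xⁿ) = 1/(n+1)` for all `n ≥ 0`.  Then the kernel of `f` contains no
nonzero ideal of `A`; equivalently, for every nonzero `a ∈ A` there exists `m ≥ 0`
with `f(xᵐ · a) ≠ 0`. -/
theorem hilbert_functional_kernel_contains_no_ideal (F : Type u) [Field F] [CharZero F]
    (f : Polynomial F →ₗ[F] F) (hf : ∀ n : ℕ, f (X ^ n) = ((n : F) + 1)⁻¹)
    (a : Polynomial F) (ha : a ≠ 0) :
    ∃ m : ℕ, f (X ^ m * a) ≠ 0 := by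
  by_contra! h
  have hpoles : Set.InjOn (fun n : ℕ => -((n : F) + 1)) a.support := fun _ _ _ _ hnk => by
    simpa using hnk
  have hcoeff := Lagrange.eq_zero_of_sum_mul_inv_sub_eq_zero hpoles a.coeff
    (Set.infinite_range_of_injective Nat.cast_injective) <| by
      rintro _ ⟨m, rfl⟩
      rw [← h m, map_X_pow_mul_eq_sum]
      refine sum_congr rfl fun n _ => ?_
      rw [hf, smul_eq_mul, sub_neg_eq_add]
      push_cast
      ring_nf
  have hlead := natDegree_mem_support_of_nonzero ha
  exact mem_support_iff.mp hlead (hcoeff _ hlead)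
end
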